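/- arXiv:1704.04873 — 2 statements merged into one kernel-verified Lean document; each statement's English description precedes it below -/
import Mathlib

section
/- Let N ≥ 2, masses m_1,...,m_N > 0 with total mass M = Σ m_j, and parameters χ, μ̃ > 0. Define the index ν(m_1,...,m_N) = (N−2) − (χM²/(8πμ̃))·(1 − Σ_j (m_j/M)²). Let 1 ≤ N' < N, let M' = Σ_{j=1}^{N'} m_j, let ν_i = ν(m_1,...,m_N) be the index of the full system, let ν̄ = ν(m_1,...,m_{N'}) be the index of the subsystem of the first N' particles, and let ν_f = ν(M', m_{N'+1},...,m_N) be the index of the system after the first N' particles are replaced by a single particle of mass M'. Then ν_f − ν_i = −(ν̄ + 1). -/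
open Finset

/-- The squared Bessel index of a `k`-particle system with masses `m 0, ..., m (k-1)`,
coupling `χ` and diffusion parameter `μt`. -/
noncomputable def besselIndex (χ μt : ℝ) (k : ℕ) (m : ℕ → ℝ) : ℝ :=
  ((k : ℝ) - 2) - χ * (∑ j ∈ Finset.range k, m j) ^ 2 / (8 * Real.pi * μt) *
    (1 - ∑ j ∈ Finset.range k, (m j / ∑ i ∈ Finset.range k, m i) ^ 2)

/-!
Since `S² (1 - ∑ (m_j / S)²) = S² - ∑ m_j² = 2 ∑_{i<j} m_i m_j`, the index of a system is
`(k - 2) - χ/(8π μ̃) · 2 ∑_{i<j} m_i m_j`. When the first `N'` particles coalesce, exactly the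
pairs inside that subsystem disappear and the particle count drops by `N' - 1`; both changes
are read off the subsystem's own index.
-/

noncomputable def crossMass (k : ℕ) (m : ℕ → ℝ) : ℝ :=
  (∑ j ∈ range k, m j) ^ 2 - ∑ j ∈ range k, m j ^ 2

noncomputable def coalesceFirst (n : ℕ) (m : ℕ → ℝ) : ℕ → ℝ :=
  fun j => if j = 0 then ∑ i ∈ range n, m i else m (n + j - 1)

lemma besselIndex_eq_sub_crossMass (χ μt : ℝ) {k : ℕ} {m : ℕ → ℝ}
    (hS : ∑ j ∈ range k, m j ≠ 0) :
    besselIndex χ μt k m = ((k : ℝ) - 2) - χ / (8 * Real.pi * μt) * crossMass k m := by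
  have hsq : ∑ j ∈ range k, (m j / ∑ i ∈ range k, m i) ^ 2
      = (∑ j ∈ range k, m j ^ 2) / (∑ i ∈ range k, m i) ^ 2 := by
    simp only [div_pow, sum_div]
  rw [besselIndex, crossMass, hsq]
  field_simp

lemma sum_range_coalesceFirst {M : Type*} [AddCommMonoid M] (f : ℝ → M) (m : ℕ → ℝ)
    (n N : ℕ) :
    ∑ j ∈ range (N - n + 1), f (coalesceFirst n m j)
      = f (∑ i ∈ range n, m i) + ∑ j ∈ Ico n N, f (m j) := by
  rw [sum_range_succ', add_comm, sum_Ico_eq_sum_range]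
  simp only [coalesceFirst, Nat.succ_ne_zero, if_false, if_true, Nat.add_succ_sub_one]

lemma sum_coalesceFirst (m : ℕ → ℝ) {n N : ℕ} (h : n ≤ N) :
    ∑ j ∈ range (N - n + 1), coalesceFirst n m j = ∑ j ∈ range N, m j :=
  (sum_range_coalesceFirst id m n N).trans (sum_range_add_sum_Ico m h)

lemma crossMass_coalesceFirst (m : ℕ → ℝ) {n N : ℕ} (h : n ≤ N) :
    crossMass (N - n + 1) (coalesceFirst n m) = crossMass N m - crossMass n m := by
  simp only [crossMass]
  rw [sum_coalesceFirst m h, sum_range_coalesceFirst (· ^ 2) m n N,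
    ← sum_range_add_sum_Ico (fun j => m j ^ 2) h]
  ring

theorem index_subtraction_formula_general
    (N N' : ℕ) (hN'1 : 1 ≤ N') (hN' : N' < N)
    (χ μt : ℝ)
    (m : ℕ → ℝ) (hm : ∀ j < N, 0 < m j) :
    besselIndex χ μt (N - N' + 1)
        (fun j => if j = 0 then ∑ i ∈ Finset.range N', m i else m (N' + j - 1))
      - besselIndex χ μt N m
      = -(besselIndex χ μt N' m + 1) := by
  have hsum_pos : ∀ n ≤ N, 1 ≤ n → 0 < ∑ j ∈ range n, m j := fun n hn h1 =>
    sum_pos (fun j hj => hm j ((mem_range.mp hj).trans_le hn)) (nonempty_range_iff.mpr (by omega))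
  have hfull := hsum_pos N le_rfl (by omega)
  have hsub := hsum_pos N' hN'.le hN'1
  have hcoal : ∑ j ∈ range (N - N' + 1), coalesceFirst N' m j ≠ 0 := by
    rw [sum_coalesceFirst m hN'.le]
    exact hfull.ne'
  change besselIndex χ μt (N - N' + 1) (coalesceFirst N' m) - _ = _
  rw [besselIndex_eq_sub_crossMass χ μt hcoal, besselIndex_eq_sub_crossMass χ μt hfull.ne',
    besselIndex_eq_sub_crossMass χ μt hsub.ne', crossMass_coalesceFirst m hN'.le,
    Nat.cast_add, Nat.cast_sub hN'.le, Nat.cast_one]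
  ring

/-- Subtraction formula for indices: coalescing the first `N'` particles into one particle of
mass `M' = ∑_{j<N'} m j` changes the full-system index by `ν_f − ν_i = −(ν̄ + 1)`. -/
theorem index_subtraction_formula
    (N N' : ℕ) (hN : 2 ≤ N) (hN'1 : 1 ≤ N') (hN' : N' < N)
    (χ μt : ℝ) (hχ : 0 < χ) (hμt : 0 < μt)
    (m : ℕ → ℝ) (hm : ∀ j < N, 0 < m j) :
    besselIndex χ μt (N - N' + 1)
        (fun j => if j = 0 then ∑ i ∈ Finset.range N', m i else m (N' + j - 1))
      - besselIndex χ μt N m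
      = -(besselIndex χ μt N' m + 1) :=
  index_subtraction_formula_general N N' hN'1 hN' χ μt m hm
end

section
/- Let μ_1 > 2μ_2 > 0 and χ > 0. Then there exist M_1, M_2 > 0 such that M_2 > 8πμ_2/χ (so the radially-symmetric two-species system blows up in finite time) and simultaneously (4μ_1 − χ(M_1+M_2)/(2π))M_1 + (4μ_2 − χ(M_1+M_2)/(2π))M_2 > 0 (so the total second moment is increasing). -/
/-!
In the units `m = χ M / (2π)` the blow-up condition is `m₂ > 4μ₂` and
`F' = (2π/χ) (4μ₁ m₁ + 4μ₂ m₂ - (m₁ + m₂)²)`. At the threshold `m₂ = 4μ₂` the bracket equals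
`m₁ (4(μ₁ - 2μ₂) - m₁)`, which is positive for `m₁ = 2(μ₁ - 2μ₂)`; by continuity it stays
positive for `m₂` slightly above the threshold.
-/

open Filter Topology

theorem exists_scaled_masses {μ₁ μ₂ : ℝ} (hμ₁ : 2 * μ₂ < μ₁) :
    ∃ m₁ m₂ : ℝ, 0 < m₁ ∧ 4 * μ₂ < m₂ ∧ (m₁ + m₂) ^ 2 < 4 * μ₁ * m₁ + 4 * μ₂ * m₂ := by
  set m₁ := 2 * (μ₁ - 2 * μ₂)
  have hm₁ : 0 < m₁ := by linarith
  let g : ℝ → ℝ := fun m₂ ↦ 4 * μ₁ * m₁ + 4 * μ₂ * m₂ - (m₁ + m₂) ^ 2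
  have hg : 0 < g (4 * μ₂) := by
    have : g (4 * μ₂) = m₁ * (4 * (μ₁ - 2 * μ₂) - m₁) := by ring
    rw [this]
    nlinarith
  have hg_cont : ContinuousAt g (4 * μ₂) := by fun_prop
  obtain ⟨m₂, hg₂, hm₂⟩ :=
    ((hg_cont.eventually (lt_mem_nhds hg)).filter_mono nhdsWithin_le_nhds
      |>.and self_mem_nhdsWithin : ∀ᶠ m₂ in 𝓝[>] (4 * μ₂), 0 < g m₂ ∧ 4 * μ₂ < m₂).exists
  exact ⟨m₁, m₂, hm₁, hm₂, by linarith [show 0 < g m₂ from hg₂]⟩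

/-- When `μ₁ > 2μ₂ > 0`, there exist component masses `M₁, M₂ > 0` for which the
radially-symmetric two-species PKS system blows up in finite time (`M₂ > 8πμ₂/χ`) while its
total second moment is increasing
(`(4μ₁ − χ(M₁+M₂)/(2π))M₁ + (4μ₂ − χ(M₁+M₂)/(2π))M₂ > 0`). -/
theorem blowup_with_increasing_second_moment
    (μ₁ μ₂ χ : ℝ) (hμ₂ : 0 < μ₂) (hμ₁ : 2 * μ₂ < μ₁) (hχ : 0 < χ) :
    ∃ M₁ M₂ : ℝ, 0 < M₁ ∧ 0 < M₂ ∧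
      8 * Real.pi * μ₂ / χ < M₂ ∧
      0 < (4 * μ₁ - χ * (M₁ + M₂) / (2 * Real.pi)) * M₁
          + (4 * μ₂ - χ * (M₁ + M₂) / (2 * Real.pi)) * M₂ := by
  obtain ⟨m₁, m₂, hm₁, hm₂, hsign⟩ := exists_scaled_masses hμ₁
  have hc : 0 < 2 * Real.pi / χ := by positivity
  have hthreshold : 8 * Real.pi * μ₂ / χ = 2 * Real.pi / χ * (4 * μ₂) := by
    field_simp; ring
  have hrate : χ * (2 * Real.pi / χ * m₁ + 2 * Real.pi / χ * m₂) / (2 * Real.pi) = m₁ + m₂ := by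
    field_simp
  refine ⟨2 * Real.pi / χ * m₁, 2 * Real.pi / χ * m₂, by positivity, mul_pos hc (by linarith), ?_, ?_⟩
  · rw [hthreshold]
    exact mul_lt_mul_of_pos_left hm₂ hc
  · rw [hrate, show ∀ c : ℝ, (4 * μ₁ - (m₁ + m₂)) * (c * m₁) + (4 * μ₂ - (m₁ + m₂)) * (c * m₂)
        = c * (4 * μ₁ * m₁ + 4 * μ₂ * m₂ - (m₁ + m₂) ^ 2) from fun c ↦ by ring]
    exact mul_pos hc (by linarith)
end
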